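/- arXiv:2601.07730 — 4 statements merged into one kernel-verified Lean document; each statement's English description precedes it below -/
import Mathlib

section
/- For every real k, if |1 + iy + k(iy)²| ≤ 1 for all y ∈ [0, Y] with Y > 0, then Y ≤ 1. Moreover, for k = 1 the bound is attained: |1 + iy − y²| ≤ 1 for all y ∈ [0, 1]. -/
/-!
On the imaginary axis `|1 + iy + k(iy)²|² = (1 - k y²)² + y² = 1 + y² (k² y² - 2k + 1)`, so for `y ≠ 0`
stability at `iy` means `k² y² ≤ 2k - 1`. As `2k - 1 ≤ k²` (with equality only at `k = 1`) and
`k = 0` is never stable, this forces `y² ≤ 1`; for `k = 1` the condition is exactly `y² ≤ 1`.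
-/

open Complex

lemma normSq_one_add_I_mul_add_mul_sq (k y : ℝ) :
    normSq (1 + I * y + k * (I * y) ^ 2) = 1 + y ^ 2 * (k ^ 2 * y ^ 2 - 2 * k + 1) := by
  simp [normSq_apply, mul_pow, ← ofReal_pow]
  ring

lemma norm_one_add_I_mul_add_mul_sq_le_one_iff (k y : ℝ) :
    ‖(1 + I * y + k * (I * y) ^ 2 : ℂ)‖ ≤ 1 ↔ y = 0 ∨ k ^ 2 * y ^ 2 ≤ 2 * k - 1 := by
  rw [← sq_le_one_iff₀ (norm_nonneg _), Complex.sq_norm, normSq_one_add_I_mul_add_mul_sq,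
    add_le_iff_nonpos_right]
  rcases eq_or_ne y 0 with rfl | hy
  · simp
  · rw [← not_lt, mul_pos_iff_of_pos_left (by positivity), not_lt]
    simp only [hy, false_or]
    constructor <;> intro h <;> linarith

lemma sq_le_one_of_sq_mul_sq_le (k y : ℝ) (h : k ^ 2 * y ^ 2 ≤ 2 * k - 1) : y ^ 2 ≤ 1 := by
  have hk : 0 < k ^ 2 := by
    rcases eq_or_ne k 0 with rfl | hk
    · norm_num at h
    · positivity
  have : k ^ 2 * y ^ 2 ≤ k ^ 2 * 1 := by nlinarith [sq_nonneg (k - 1)]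
  exact le_of_mul_le_mul_left this hk

theorem optimal_real_coefficient :
    (∀ k Y : ℝ, 0 < Y →
      (∀ y : ℝ, y ∈ Set.Icc 0 Y → ‖(1 + I * y + k * (I * y)^2 : ℂ)‖ ≤ 1) → Y ≤ 1) ∧
      ∀ y : ℝ, y ∈ Set.Icc (0:ℝ) 1 → ‖(1 + I * y - y^2 : ℂ)‖ ≤ 1 := by
  constructor
  · intro k Y hY hstable
    have hYstable := (norm_one_add_I_mul_add_mul_sq_le_one_iff k Y).mp (hstable Y ⟨hY.le, le_rfl⟩)
    have hY1 := sq_le_one_of_sq_mul_sq_le k Y (hYstable.resolve_left hY.ne')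
    exact (sq_le_one_iff₀ hY.le).mp hY1
  · rintro y ⟨hy0, hy1⟩
    have hk1 : (1 + I * y - y ^ 2 : ℂ) = 1 + I * y + (1 : ℝ) * (I * y) ^ 2 := by
      simp [mul_pow]
      ring
    rw [hk1, norm_one_add_I_mul_add_mul_sq_le_one_iff]
    right
    nlinarith
end

section
/- With the complex coefficient k = 1/2 + i/2, the stability polynomial Φ(z) = 1 + z + kz² satisfies |Φ(iy)| ≤ 1 for all y ∈ [0, 2], and |Φ(iy)| > 1 for y > 2. In particular, its key identity is |Φ(iy)|² = 1 + y³(y/2 − 1). -/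
open Complex

lemma stability_poly_imag_axis_eq (y : ℝ) :
    (1 + I * y + (1/2 + I/2) * (I * y)^2 : ℂ) = ⟨1 - y^2/2, y - y^2/2⟩ := by
  apply Complex.ext <;> simp [mul_pow, ← ofReal_pow] <;> ring

lemma norm_sq_stability_poly_imag_axis (y : ℝ) :
    ‖(1 + I * y + (1/2 + I/2) * (I * y)^2 : ℂ)‖ ^ 2 = 1 + y^3 * (y/2 - 1) := by
  rw [stability_poly_imag_axis_eq, Complex.sq_norm, Complex.normSq_mk]
  ring

lemma norm_stability_poly_imag_axis_le_one {y : ℝ} (hy : y ∈ Set.Icc (0:ℝ) 2) :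
    ‖(1 + I * y + (1/2 + I/2) * (I * y)^2 : ℂ)‖ ≤ 1 := by
  rw [← sq_le_one_iff₀ (norm_nonneg _), norm_sq_stability_poly_imag_axis]
  nlinarith [mul_nonneg (pow_nonneg hy.1 3) (sub_nonneg.2 hy.2)]

lemma one_lt_norm_stability_poly_imag_axis {y : ℝ} (hy : 2 < y) :
    1 < ‖(1 + I * y + (1/2 + I/2) * (I * y)^2 : ℂ)‖ := by
  rw [← one_lt_sq_iff₀ (norm_nonneg _), norm_sq_stability_poly_imag_axis]
  nlinarith [mul_pos (pow_pos (two_pos.trans hy) 3) (show (0:ℝ) < y/2 - 1 by linarith)]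

theorem optimal_complex_integrator_positive_axis :
    (∀ y : ℝ, y ∈ Set.Icc (0:ℝ) 2 →
      ‖(1 + I * y + (1/2 + I/2) * (I * y)^2 : ℂ)‖ ≤ 1) ∧
    (∀ y : ℝ, 2 < y → 1 < ‖(1 + I * y + (1/2 + I/2) * (I * y)^2 : ℂ)‖) ∧
    ∀ y : ℝ, ‖(1 + I * y + (1/2 + I/2) * (I * y)^2 : ℂ)‖ ^ 2 = 1 + y^3 * (y/2 - 1) :=
  ⟨fun _ => norm_stability_poly_imag_axis_le_one, fun _ => one_lt_norm_stability_poly_imag_axis,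
    norm_sq_stability_poly_imag_axis⟩
end

section
/- For every complex k, if |1 + iy + k(iy)²| ≤ 1 for all y ∈ [0, Y] with Y > 0, then Y ≤ 2; and Y = 2 is achieved exactly for k = 1/2 + i/2. Hence the optimal 2-stage first-order stability polynomial for eigenvalues on the positive imaginary axis has a genuinely complex coefficient, and its stable interval is twice as long as the optimal real-coefficient interval [0, 1]. -/
/-!
Write `k = a + bi`. Expanding, `|Φ(iy)|² - 1 = y² q(y)` with
`q(y) = |k|² y² - 2b y + (1 - 2a)`, so stability on `[0, Y]` means `q ≤ 0` on `(0, Y]`;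
by continuity `q(0) = 1 - 2a ≤ 0`. Now `q(2) = (2b - 1)² + 2a(2a - 1)` is nonnegative once
`a ≥ 1/2`, and vanishes only for `a = b = 1/2`. So `Y ≥ 2` forces `k = (1 + i)/2`, for which
`q(y) = y(y - 2)/2` is nonpositive exactly on `(0, 2]`.
-/

open Complex

def stabilityPoly (k z : ℂ) : ℂ := 1 + z + k * z ^ 2

noncomputable def stabilityQuadratic (k : ℂ) (y : ℝ) : ℝ :=
  ‖k‖ ^ 2 * y ^ 2 - 2 * k.im * y + (1 - 2 * k.re)

lemma norm_stabilityPoly_sq_sub_one (k : ℂ) (y : ℝ) :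
    ‖stabilityPoly k (I * y)‖ ^ 2 - 1 = y ^ 2 * stabilityQuadratic k y := by
  simp only [stabilityPoly, stabilityQuadratic, Complex.sq_norm, normSq_apply]
  simp only [pow_two, add_re, one_re, mul_re, I_re, ofReal_re, zero_mul, I_im, ofReal_im, mul_zero,
    sub_self, add_zero, mul_im, one_mul, zero_add, zero_sub, mul_neg, sub_zero, add_im, one_im]
  ring

lemma norm_stabilityPoly_le_one_iff (k : ℂ) {y : ℝ} (hy : y ≠ 0) :
    ‖stabilityPoly k (I * y)‖ ≤ 1 ↔ stabilityQuadratic k y ≤ 0 := by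
  rw [← sq_le_one_iff₀ (norm_nonneg _), ← sub_nonpos, norm_stabilityPoly_sq_sub_one,
    mul_nonpos_iff_pos_imp_nonpos]
  have hy2 : 0 < y ^ 2 := by positivity
  simp [hy2, hy2.le]

lemma norm_stabilityPoly_le_one_on_Icc_iff (k : ℂ) (Y : ℝ) :
    (∀ y ∈ Set.Icc 0 Y, ‖stabilityPoly k (I * y)‖ ≤ 1) ↔
      ∀ y ∈ Set.Ioc 0 Y, stabilityQuadratic k y ≤ 0 := by
  constructor
  · intro h y hy
    exact (norm_stabilityPoly_le_one_iff k hy.1.ne').1 (h y (Set.Ioc_subset_Icc_self hy))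
  · intro h y hy
    rcases hy.1.eq_or_lt with rfl | hy0
    · simp [stabilityPoly]
    · exact (norm_stabilityPoly_le_one_iff k hy0.ne').2 (h y ⟨hy0, hy.2⟩)

lemma continuous_stabilityQuadratic (k : ℂ) : Continuous (stabilityQuadratic k) := by
  unfold stabilityQuadratic
  fun_prop

lemma half_le_re_of_stabilityQuadratic_nonpos {k : ℂ} {Y : ℝ} (hY : 0 < Y)
    (h : ∀ y ∈ Set.Ioc 0 Y, stabilityQuadratic k y ≤ 0) : 1 / 2 ≤ k.re := by
  have hclosure : Set.Icc 0 Y ⊆ {y | stabilityQuadratic k y ≤ 0} := by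
    rw [← closure_Ioc hY.ne,
      (isClosed_le (continuous_stabilityQuadratic k) continuous_const).closure_subset_iff]
    exact h
  have hzero : stabilityQuadratic k 0 ≤ 0 := hclosure ⟨le_rfl, hY.le⟩
  simp only [stabilityQuadratic] at hzero
  linarith

lemma stabilityQuadratic_two (k : ℂ) :
    stabilityQuadratic k 2 = (2 * k.im - 1) ^ 2 + 2 * k.re * (2 * k.re - 1) := by
  simp only [stabilityQuadratic, Complex.sq_norm, normSq_apply]
  ring

lemma stabilityQuadratic_half_add_half_I (y : ℝ) :
    stabilityQuadratic (1 / 2 + I / 2) y = y * (y - 2) / 2 := by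
  have hre : (1 / 2 + I / 2).re = 1 / 2 := by simp
  have him : (1 / 2 + I / 2).im = 1 / 2 := by simp
  rw [stabilityQuadratic, Complex.sq_norm, normSq_apply, hre, him]
  ring

lemma eq_half_add_half_I_of_stabilityQuadratic_nonpos {k : ℂ} {Y : ℝ} (hY : 2 ≤ Y)
    (h : ∀ y ∈ Set.Ioc 0 Y, stabilityQuadratic k y ≤ 0) : k = 1 / 2 + I / 2 := by
  have hre_ge := half_le_re_of_stabilityQuadratic_nonpos (by linarith) h
  have htwo := stabilityQuadratic_two k ▸ h 2 ⟨two_pos, hY⟩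
  have hre : k.re = 1 / 2 := by nlinarith [sq_nonneg (2 * k.im - 1)]
  have him : k.im = 1 / 2 := by nlinarith [sq_nonneg (2 * k.im - 1)]
  apply Complex.ext <;> simp [hre, him]

theorem optimal_two_stage_first_order :
    (∀ (k : ℂ) (Y : ℝ), 0 < Y →
      (∀ y : ℝ, y ∈ Set.Icc 0 Y → ‖1 + I * y + k * (I * y)^2‖ ≤ 1) → Y ≤ 2) ∧
    (∀ k : ℂ,
      (∀ y : ℝ, y ∈ Set.Icc (0:ℝ) 2 → ‖1 + I * y + k * (I * y)^2‖ ≤ 1) ↔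
        k = 1/2 + I/2) := by
  refine ⟨fun k Y hY hstable => ?_, fun k => ⟨fun hstable => ?_, ?_⟩⟩
  · have hq := (norm_stabilityPoly_le_one_on_Icc_iff k Y).1 hstable
    by_contra! hY2
    obtain rfl := eq_half_add_half_I_of_stabilityQuadratic_nonpos hY2.le hq
    have hqY := stabilityQuadratic_half_add_half_I Y ▸ hq Y ⟨hY, le_rfl⟩
    nlinarith
  · exact eq_half_add_half_I_of_stabilityQuadratic_nonpos le_rfl
      ((norm_stabilityPoly_le_one_on_Icc_iff k 2).1 hstable)
  · rintro rfl
    refine (norm_stabilityPoly_le_one_on_Icc_iff _ 2).2 fun y hy => ?_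
    rw [stabilityQuadratic_half_add_half_I]
    nlinarith [hy.1, hy.2]
end

section
/- With k = 1/2 − i/2, the polynomial Φ(z) = 1 + z + kz² satisfies |Φ(−iy)| ≤ 1 for all y ∈ [0, 2]. -/
open Complex

theorem stabilityPoly_neg_I_mul (y : ℝ) :
    1 + (-(I * y)) + (1/2 - I/2) * (-(I * y))^2
      = ((1 - y^2 / 2 : ℝ) : ℂ) + ((y^2 / 2 - y : ℝ) : ℂ) * I := by
  push_cast
  linear_combination (1/2 - I/2) * (y : ℂ)^2 * I_sq

theorem normSq_stabilityPoly_neg_I_mul (y : ℝ) :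
    normSq (1 + (-(I * y)) + (1/2 - I/2) * (-(I * y))^2) = 1 - y^3 * (2 - y) / 2 := by
  rw [stabilityPoly_neg_I_mul, ← mk_eq_add_mul_I, normSq_mk]
  ring

theorem optimal_complex_integrator_negative_axis :
    ∀ y : ℝ, y ∈ Set.Icc (0:ℝ) 2 →
      ‖(1 + (-(I * y)) + (1/2 - I/2) * (-(I * y))^2 : ℂ)‖ ≤ 1 := by
  rintro y ⟨hy0, hy2⟩
  have h_defect : 0 ≤ y^3 * (2 - y) := mul_nonneg (pow_nonneg hy0 3) (sub_nonneg.2 hy2)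
  rw [← sq_le_one_iff₀ (norm_nonneg _), ← normSq_eq_norm_sq, normSq_stabilityPoly_neg_I_mul]
  linarith
end
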